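/- Let F be a field of characteristic 0 and let n ≥ 2. Let M be the n×n symmetric matrix over F that is the direct sum of the (n−2)×(n−2) identity matrix and the 2×2 matrix [[1, 1], [1, 0]]. Then qpr(M) = S S ⋯ S A, i.e., for every k with 1 ≤ k ≤ n − 1, M has both a zero and a nonzero quasi-principal minor of order k, and det M ≠ 0. -/

import Mathlib

open Matrix

/-- The minor of a square matrix `B` lying in the rows indexed by `α` and the columns
indexed by `β` (each listed in increasing order); junk value `0` if `α.card ≠ β.card`. -/
def qMinor {R : Type*} [CommRing R] {m : Type*} [Fintype m] [LinearOrder m]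
    (B : Matrix m m R) (α β : Finset m) : R :=
  if h : β.card = α.card then
    (Matrix.of fun i j : Fin α.card =>
      B (α.orderEmbOfFin rfl i) (β.orderEmbOfFin h j)).det
  else 0

/-- `α` and `β` index a quasi-principal submatrix of order `k`, i.e.
`|α| = |β| = k` and `k - 1 ≤ |α ∩ β| (≤ k)`. -/
def IsQPPair {m : Type*} [DecidableEq m] (k : ℕ) (α β : Finset m) : Prop :=
  α.card = k ∧ β.card = k ∧ k - 1 ≤ (α ∩ β).card

/-- All quasi-principal minors of `B` of order `k` are nonzero. -/
def QPAllNonzero {R : Type*} [CommRing R] {m : Type*} [Fintype m] [LinearOrder m]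
    (B : Matrix m m R) (k : ℕ) : Prop :=
  ∀ α β : Finset m, IsQPPair k α β → qMinor B α β ≠ 0

/-- All quasi-principal minors of `B` of order `k` are zero. -/
def QPAllZero {R : Type*} [CommRing R] {m : Type*} [Fintype m] [LinearOrder m]
    (B : Matrix m m R) (k : ℕ) : Prop :=
  ∀ α β : Finset m, IsQPPair k α β → qMinor B α β = 0

/-- The three possible letters of a qpr-sequence. -/
inductive QPR : Type
  | A
  | S
  | N
deriving DecidableEq

open Classical in
/-- The letter of the qpr-sequence of `B` corresponding to order `k`:
`A` if all quasi-principal minors of order `k` are nonzero, `N` if all are zero,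
and `S` otherwise. -/
noncomputable def qprEntry {R : Type*} [CommRing R] {m : Type*} [Fintype m] [LinearOrder m]
    (B : Matrix m m R) (k : ℕ) : QPR :=
  if QPAllNonzero B k then QPR.A
  else if QPAllZero B k then QPR.N
  else QPR.S

/-- A sequence of letters `q 0, …, q (n-1)` (standing for `q_1 ⋯ q_n`) is attainable
over `F` if it is the qpr-sequence of an `n × n` symmetric matrix over `F`. -/
def Attainable (F : Type*) [Field F] {n : ℕ} (q : Fin n → QPR) : Prop :=
  ∃ B : Matrix (Fin n) (Fin n) F, B.IsSymm ∧ ∀ k : Fin n, qprEntry B ((k : ℕ) + 1) = q k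

/-- The Schur complement `B/B[γ] = B[γᶜ] - B[γᶜ, γ] B[γ]⁻¹ B[γ, γᶜ]`,
with rows and columns indexed by `γᶜ` (indexing inherited from `B`). -/
noncomputable def schurCompl {R : Type*} [CommRing R] {n : ℕ}
    (B : Matrix (Fin n) (Fin n) R) (γ : Finset (Fin n)) :
    Matrix ↥(γᶜ) ↥(γᶜ) R :=
  B.submatrix (fun i : ↥(γᶜ) => (i : Fin n)) (fun j : ↥(γᶜ) => (j : Fin n)) -
    B.submatrix (fun i : ↥(γᶜ) => (i : Fin n)) (fun j : ↥γ => (j : Fin n)) *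
      (B.submatrix (fun i : ↥γ => (i : Fin n)) fun j : ↥γ => (j : Fin n))⁻¹ *
      B.submatrix (fun i : ↥γ => (i : Fin n)) fun j : ↥(γᶜ) => (j : Fin n)

/-- The `(m+1) × (m+1)` matrix with block form `[[A, x], [yᵀ, b]]`. -/
def borderMat {R : Type*} [CommRing R] {m : ℕ} (A : Matrix (Fin m) (Fin m) R)
    (x y : Fin m → R) (b : R) : Matrix (Fin (m + 1)) (Fin (m + 1)) R :=
  Matrix.of fun i j =>
    if hi : (i : ℕ) < m then
      if hj : (j : ℕ) < m then A ⟨i, hi⟩ ⟨j, hj⟩ else x ⟨i, hi⟩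
    else
      if hj : (j : ℕ) < m then y ⟨j, hj⟩ else b

/-! The last row of `M` is `(0, …, 0, 1, 0)`, so the principal minor on the rows and columns
`{0, …, k-2, n-1}` (indices from `0`) has a zero row whenever `k ≤ n - 1`, while the leading
principal minor of order `k ≤ n - 1` is the determinant of an identity matrix. Swapping the last two rows of `M`
produces a unit lower triangular matrix, hence `det M = -1`. -/

theorem isQPPair_self {m : Type*} [DecidableEq m] {k : ℕ} {α : Finset m} (h : α.card = k) :
    IsQPPair k α α :=
  ⟨h, h, by rw [Finset.inter_self, h]; exact Nat.sub_le k 1⟩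

section QuasiPrincipal

variable {R : Type*} [CommRing R] {m : Type*} [Fintype m] [LinearOrder m]

theorem qMinor_self (B : Matrix m m R) (α : Finset m) :
    qMinor B α α = (B.submatrix (α.orderEmbOfFin rfl) (α.orderEmbOfFin rfl)).det := by
  rw [qMinor, dif_pos rfl]
  rfl

theorem qMinor_self_eq_zero_of_row_eq_zero {B : Matrix m m R} {α : Finset m} {i : m}
    (hi : i ∈ α) (hrow : ∀ j ∈ α, B i j = 0) : qMinor B α α = 0 := by
  obtain ⟨r, hr⟩ : i ∈ Set.range (α.orderEmbOfFin rfl) := by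
    rwa [Finset.range_orderEmbOfFin]
  rw [qMinor_self]
  exact det_eq_zero_of_row_eq_zero r fun j ↦ by
    simpa [hr] using hrow _ (α.orderEmbOfFin_mem rfl j)

theorem qMinor_self_eq_one {B : Matrix m m R} {α : Finset m}
    (hB : ∀ i ∈ α, ∀ j ∈ α, B i j = (1 : Matrix m m R) i j) : qMinor B α α = 1 := by
  have hsub : B.submatrix (α.orderEmbOfFin rfl) (α.orderEmbOfFin rfl) =
      (1 : Matrix m m R).submatrix (α.orderEmbOfFin rfl) (α.orderEmbOfFin rfl) := by
    ext i j
    exact hB _ (α.orderEmbOfFin_mem rfl i) _ (α.orderEmbOfFin_mem rfl j)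
  rw [qMinor_self, hsub, submatrix_one _ (α.orderEmbOfFin rfl).injective, det_one]

end QuasiPrincipal

/-- The direct sum of the `(n-2) × (n-2)` identity matrix and `[[1, 1], [1, 0]]`. -/
def idSumFib (R : Type*) [Zero R] [One R] (n : ℕ) : Matrix (Fin n) (Fin n) R :=
  Matrix.of fun i j : Fin n =>
    if i = j then (if (i : ℕ) < n - 1 then 1 else 0)
    else if n - 2 ≤ (i : ℕ) ∧ n - 2 ≤ (j : ℕ) then 1 else 0

section idSumFib

variable {R : Type*} [CommRing R] {n : ℕ}

theorem idSumFib_apply_of_lt {i j : Fin n} (hi : (i : ℕ) < n - 1) (hj : (j : ℕ) < n - 1) :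
    idSumFib R n i j = (1 : Matrix (Fin n) (Fin n) R) i j := by
  by_cases hij : i = j
  · subst hij
    simp [idSumFib, hi]
  · have : ¬ (n - 2 ≤ (i : ℕ) ∧ n - 2 ≤ (j : ℕ)) := fun h ↦ hij (Fin.ext (by omega))
    simp only [idSumFib, of_apply, if_neg hij, if_neg this, one_apply_ne hij]

theorem idSumFib_apply_last_row {i j : Fin n} (hi : (i : ℕ) = n - 1) (hj : (j : ℕ) ≠ n - 2) :
    idSumFib R n i j = 0 := by
  by_cases hij : i = j
  · subst hij
    simp [idSumFib, hi]
  · have : ¬ (n - 2 ≤ (i : ℕ) ∧ n - 2 ≤ (j : ℕ)) := fun h ↦ hij (Fin.ext (by omega))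
    simp only [idSumFib, of_apply, if_neg hij, if_neg this]

theorem exists_qMinor_idSumFib_eq_zero {k : ℕ} (hk : 1 ≤ k) (hkn : k < n) :
    ∃ α β : Finset (Fin n), IsQPPair k α β ∧ qMinor (idSumFib R n) α β = 0 := by
  let last : Fin n := ⟨n - 1, by omega⟩
  let α := insert last (Finset.Iio (⟨k - 1, by omega⟩ : Fin n))
  have hcard : α.card = k := by
    rw [Finset.card_insert_of_notMem (by simp only [Finset.mem_Iio, Fin.lt_def, last]; omega),
      Fin.card_Iio]
    exact Nat.sub_add_cancel hk
  refine ⟨α, α, isQPPair_self hcard,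
    qMinor_self_eq_zero_of_row_eq_zero (Finset.mem_insert_self last _) fun j hj ↦ ?_⟩
  refine idSumFib_apply_last_row rfl ?_
  simp only [α, Finset.mem_insert, Finset.mem_Iio, Fin.lt_def, Fin.ext_iff, last] at hj
  omega

theorem exists_qMinor_idSumFib_ne_zero [Nontrivial R] {k : ℕ} (hkn : k < n) :
    ∃ α β : Finset (Fin n), IsQPPair k α β ∧ qMinor (idSumFib R n) α β ≠ 0 := by
  let α := Finset.Iio (⟨k, hkn⟩ : Fin n)
  refine ⟨α, α, isQPPair_self (Fin.card_Iio _), ?_⟩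
  rw [qMinor_self_eq_one fun i hi j hj ↦ ?_]
  · exact one_ne_zero
  simp only [α, Finset.mem_Iio, Fin.lt_def] at hi hj
  exact idSumFib_apply_of_lt (by omega) (by omega)

theorem det_idSumFib (hn : 2 ≤ n) : (idSumFib R n).det = -1 := by
  let σ : Equiv.Perm (Fin n) := Equiv.swap ⟨n - 2, by omega⟩ ⟨n - 1, by omega⟩
  have hσ : ∀ i : Fin n, ((σ i : Fin n) : ℕ) =
      if (i : ℕ) = n - 2 then n - 1 else if (i : ℕ) = n - 1 then n - 2 else i := by
    intro i
    simp only [σ, Equiv.swap_apply_def, Fin.ext_iff]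
    split_ifs <;> simp_all
  -- the swapped matrix is the identity plus a single `1` at position `(n-1, n-2)`
  have hentry : ∀ i j : Fin n, (idSumFib R n).submatrix σ id i j =
      if (j : ℕ) ≤ i ∧ (n - 2 ≤ (j : ℕ) ∨ i = j) then 1 else 0 := by
    intro i j
    have := hσ i
    simp only [submatrix_apply, id, idSumFib, of_apply, Fin.ext_iff]
    split_ifs at this ⊢ <;> first | rfl | omega
  have hlower : ((idSumFib R n).submatrix σ id).IsLowerTriangular := by
    intro i j hij
    rw [hentry, if_neg]
    simp only [OrderDual.toDual_lt_toDual, Fin.lt_def] at hij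
    omega
  have hdet := det_permute σ (idSumFib R n)
  rw [det_of_isLowerTriangular _ hlower, Finset.prod_eq_one fun i _ ↦ by rw [hentry]; simp,
    Equiv.Perm.sign_swap (by simp [Fin.ext_iff]; omega)] at hdet
  simp only [Units.val_neg, Units.val_one, Int.cast_neg, Int.cast_one, neg_one_mul] at hdet
  linear_combination hdet

end idSumFib

theorem stmt_18_general {F : Type*} [Field F] {n : ℕ} (hn : 2 ≤ n)
    (M : Matrix (Fin n) (Fin n) F)
    (hM : M = Matrix.of fun i j : Fin n =>
      if i = j then (if (i : ℕ) < n - 1 then 1 else 0)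
      else if n - 2 ≤ (i : ℕ) ∧ n - 2 ≤ (j : ℕ) then 1 else 0) :
    (∀ k : ℕ, 1 ≤ k → k ≤ n - 1 →
      (∃ α β : Finset (Fin n), IsQPPair k α β ∧ qMinor M α β = 0) ∧
      (∃ α β : Finset (Fin n), IsQPPair k α β ∧ qMinor M α β ≠ 0)) ∧
    M.det ≠ 0 := by
  obtain rfl : M = idSumFib F n := hM
  refine ⟨fun k hk hkn ↦ ⟨exists_qMinor_idSumFib_eq_zero hk (by omega),
    exists_qMinor_idSumFib_ne_zero (by omega)⟩, ?_⟩
  rw [det_idSumFib hn]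
  exact neg_ne_zero.mpr one_ne_zero

/-- over a field of characteristic 0 and for `n ≥ 2`, the direct sum `M` of
the `(n-2) × (n-2)` identity matrix and `[[1, 1], [1, 0]]` has
`qpr(M) = S S ⋯ S A`: for each `k` with `1 ≤ k ≤ n - 1` the matrix `M` has both a zero
and a nonzero quasi-principal minor of order `k`, and `det M ≠ 0`. -/
theorem stmt_18 {F : Type*} [Field F] [CharZero F] {n : ℕ} (hn : 2 ≤ n)
    (M : Matrix (Fin n) (Fin n) F)
    (hM : M = Matrix.of fun i j : Fin n =>
      if i = j then (if (i : ℕ) < n - 1 then 1 else 0)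
      else if n - 2 ≤ (i : ℕ) ∧ n - 2 ≤ (j : ℕ) then 1 else 0) :
    (∀ k : ℕ, 1 ≤ k → k ≤ n - 1 →
      (∃ α β : Finset (Fin n), IsQPPair k α β ∧ qMinor M α β = 0) ∧
      (∃ α β : Finset (Fin n), IsQPPair k α β ∧ qMinor M α β ≠ 0)) ∧
    M.det ≠ 0 :=
  stmt_18_general hn M hM
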